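/- arXiv:2305.01196 — 4 statements merged into one kernel-verified Lean document; each statement's English description precedes it below -/
import Mathlib

section
/- Let X be a complex Banach space, A = (A_1,...,A_m) a commuting m-tuple of bounded operators with cyclic k-tuple U = (u_1,...,u_k), and B = (B_1,...,B_m) a commuting m-tuple with cyclic k-tuple V = (v_1,...,v_k). Suppose there exists c > 0 such that c^{-1} ‖Σ_j p_j(B) v_j‖ ≤ ‖Σ_j p_j(A) u_j‖ ≤ c ‖Σ_j p_j(B) v_j‖ for all polynomials p_1,...,p_k ∈ ℂ[z_1,...,z_m]. Then there exists a bounded invertible operator S on X such that S A_ℓ = B_ℓ S for all ℓ = 1,...,m; i.e., A and B are simultaneously similar. -/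
/-- Polynomial functional calculus for a (commuting) tuple of bounded operators:
`p(A) = Σ_d coeff_d • A₁^{d₁} ⋯ A_m^{d_m}`. -/
noncomputable def evalT {m : ℕ} {X : Type*} [NormedAddCommGroup X] [NormedSpace ℂ X]
    (A : Fin m → X →L[ℂ] X) (p : MvPolynomial (Fin m) ℂ) : X →L[ℂ] X :=
  ∑ d ∈ p.support, p.coeff d • ((List.finRange m).map fun i => A i ^ d i).prod

section Alg
variable {m : ℕ} {X : Type*} [NormedAddCommGroup X] [NormedSpace ℂ X]
  (A : Fin m → X →L[ℂ] X)

/-- The monomial operator. -/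
noncomputable def monT (d : Fin m →₀ ℕ) : X →L[ℂ] X :=
  ((List.finRange m).map fun i => A i ^ d i).prod

lemma evalT_eq (p : MvPolynomial (Fin m) ℂ) :
    evalT A p = ∑ d ∈ p.support, p.coeff d • monT A d := rfl

lemma monT_comm (hA : ∀ i j, A i * A j = A j * A i) (d : Fin m →₀ ℕ) :
    ((Finset.univ : Finset (Fin m)) : Set (Fin m)).Pairwise
      (Function.onFun Commute fun i => A i ^ d i) :=
  fun i _ j _ _ => (Commute.pow_pow (hA i j) _ _)

lemma monT_eq_noncommProd (hA : ∀ i j, A i * A j = A j * A i) (d : Fin m →₀ ℕ) :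
    monT A d = Finset.univ.noncommProd (fun i => A i ^ d i) (monT_comm A hA d) := by
  calc monT A d = ((List.finRange m).map fun i => A i ^ d i).prod := rfl
    _ = Finset.noncommProd (List.finRange m).toFinset (fun i => A i ^ d i)
        (by rw [List.toFinset_finRange]; exact monT_comm A hA d) :=
      (Finset.noncommProd_toFinset _ _ _ (List.nodup_finRange m)).symm
    _ = Finset.noncommProd Finset.univ (fun i => A i ^ d i) (monT_comm A hA d) :=
      Finset.noncommProd_congr (List.toFinset_finRange m) (fun x _ => rfl) _

lemma monT_single (hA : ∀ i j, A i * A j = A j * A i) (ℓ : Fin m) :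
    monT A (Finsupp.single ℓ 1) = A ℓ := by
  classical
  rw [monT_eq_noncommProd A hA]
  rw [← Finset.mul_noncommProd_erase (Finset.univ) (Finset.mem_univ ℓ)
    (fun i => A i ^ (Finsupp.single ℓ 1) i) (monT_comm A hA _)]
  erw [Finset.noncommProd_eq_pow_card _ _ _ (1 : X →L[ℂ] X) ?_]
  · simp
  · intro x hx
    rw [Finset.mem_erase] at hx
    simp [Finsupp.single_apply, Ne.symm hx.1]

lemma monT_add (hA : ∀ i j, A i * A j = A j * A i) (d e : Fin m →₀ ℕ) :
    monT A (d + e) = monT A d * monT A e := by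
  rw [monT_eq_noncommProd A hA, monT_eq_noncommProd A hA d, monT_eq_noncommProd A hA e]
  have : (fun i => A i ^ (d + e) i) = (fun i => A i ^ d i) * fun i => A i ^ e i := by
    funext i; simp [pow_add]
  rw [Finset.noncommProd_congr rfl (fun x _ => congrFun this x)]
  exact Finset.noncommProd_mul_distrib _ _ _ _
    (fun i _ j _ _ => (Commute.pow_pow (hA i j) _ _))

lemma evalT_eq_sum_of_subset (p : MvPolynomial (Fin m) ℂ) {s : Finset (Fin m →₀ ℕ)}
    (h : p.support ⊆ s) : evalT A p = ∑ d ∈ s, p.coeff d • monT A d := by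
  rw [evalT_eq]
  exact Finset.sum_subset h (by intro d _ hd; simp [MvPolynomial.notMem_support_iff.mp hd])

lemma evalT_add (p q : MvPolynomial (Fin m) ℂ) :
    evalT A (p + q) = evalT A p + evalT A q := by
  classical
  rw [evalT_eq_sum_of_subset A (p+q) (s := p.support ∪ q.support)
      (MvPolynomial.support_add ..),
    evalT_eq_sum_of_subset A p (s := p.support ∪ q.support) Finset.subset_union_left,
    evalT_eq_sum_of_subset A q (s := p.support ∪ q.support) Finset.subset_union_right,
    ← Finset.sum_add_distrib]
  exact Finset.sum_congr rfl fun d _ => by rw [MvPolynomial.coeff_add, add_smul]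

lemma evalT_smul (a : ℂ) (p : MvPolynomial (Fin m) ℂ) :
    evalT A (a • p) = a • evalT A p := by
  classical
  rw [evalT_eq_sum_of_subset A (a • p) (s := p.support) (MvPolynomial.support_smul),
    evalT_eq, Finset.smul_sum]
  exact Finset.sum_congr rfl fun d _ => by
    rw [MvPolynomial.coeff_smul, smul_smul, smul_eq_mul]

lemma evalT_monomial (d : Fin m →₀ ℕ) (a : ℂ) :
    evalT A (MvPolynomial.monomial d a) = a • monT A d := by
  classical
  rw [evalT_eq_sum_of_subset A _ (s := {d}) (MvPolynomial.support_monomial_subset),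
    Finset.sum_singleton, MvPolynomial.coeff_monomial]
  simp

lemma evalT_X_mul (hA : ∀ i j, A i * A j = A j * A i) (ℓ : Fin m)
    (p : MvPolynomial (Fin m) ℂ) :
    evalT A (MvPolynomial.X ℓ * p) = A ℓ * evalT A p := by
  induction p using MvPolynomial.induction_on' with
  | monomial d a =>
      rw [MvPolynomial.X, MvPolynomial.monomial_mul, evalT_monomial, evalT_monomial,
        one_mul, monT_add A hA, monT_single A hA]
      rw [mul_smul_comm]
  | add p q hp hq =>
      rw [mul_add, evalT_add, evalT_add, hp, hq, mul_add]

end Alg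

section Main

variable {m k : ℕ} {X : Type*} [NormedAddCommGroup X] [NormedSpace ℂ X]

/-- The linear map `p ↦ Σ_j p_j(A) u_j`. -/
noncomputable def Qmap (A : Fin m → X →L[ℂ] X) (u : Fin k → X) :
    (Fin k → MvPolynomial (Fin m) ℂ) →ₗ[ℂ] X where
  toFun p := ∑ j, evalT A (p j) (u j)
  map_add' p q := by
    rw [← Finset.sum_add_distrib]
    exact Finset.sum_congr rfl fun j _ => by
      simp [evalT_add]
  map_smul' a p := by
    show (∑ j, evalT A ((a • p) j) (u j)) = a • ∑ j, evalT A (p j) (u j)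
    rw [Finset.smul_sum]
    exact Finset.sum_congr rfl fun j _ => by
      simp [evalT_smul]

lemma Qmap_X_mul (A : Fin m → X →L[ℂ] X) (hA : ∀ i j, A i * A j = A j * A i)
    (u : Fin k → X) (ℓ : Fin m) (p : Fin k → MvPolynomial (Fin m) ℂ) :
    Qmap A u (fun j => MvPolynomial.X ℓ * p j) = A ℓ (Qmap A u p) := by
  simp only [Qmap, LinearMap.coe_mk, AddHom.coe_mk, map_sum]
  exact Finset.sum_congr rfl fun j _ => by
    rw [evalT_X_mul A hA]; rfl

variable [CompleteSpace X]

/-- Factor a dominated linear map through the range of another. -/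
lemma factor_exists {P : Type*} [AddCommGroup P] [Module ℂ P]
    (Q T : P →ₗ[ℂ] X) (c : ℝ) (h : ∀ p, ‖T p‖ ≤ c * ‖Q p‖) :
    ∃ S : LinearMap.range Q →L[ℂ] X, ∀ p, S ⟨Q p, LinearMap.mem_range_self Q p⟩ = T p := by
  have hker : LinearMap.ker Q ≤ LinearMap.ker T := by
    intro p hp
    rw [LinearMap.mem_ker] at hp ⊢
    have := h p
    rw [hp, norm_zero, mul_zero] at this
    exact norm_le_zero_iff.mp this
  set T' : (P ⧸ LinearMap.ker Q) →ₗ[ℂ] X := (LinearMap.ker Q).liftQ T hker with hT'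
  set S₀ : LinearMap.range Q →ₗ[ℂ] X := T' ∘ₗ (Q.quotKerEquivRange.symm : _ →ₗ[ℂ] _) with hS₀
  have hS₀app : ∀ p, S₀ ⟨Q p, LinearMap.mem_range_self Q p⟩ = T p := by
    intro p
    have h1 : Q.quotKerEquivRange.symm ⟨Q p, LinearMap.mem_range_self Q p⟩ =
        Submodule.Quotient.mk p := Q.quotKerEquivRange_symm_apply_image p _
    simp only [hS₀, LinearMap.comp_apply, LinearEquiv.coe_coe, h1]
    exact Submodule.liftQ_apply _ _ _
  refine ⟨S₀.mkContinuous c ?_, fun p => hS₀app p⟩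
  rintro ⟨x, hx⟩
  obtain ⟨p, rfl⟩ := hx
  rw [hS₀app p]
  exact h p

end Main

theorem stmt3 {m k : ℕ} {X : Type*} [NormedAddCommGroup X] [NormedSpace ℂ X] [CompleteSpace X]
    (A B : Fin m → X →L[ℂ] X)
    (hA : ∀ i j, A i * A j = A j * A i) (hB : ∀ i j, B i * B j = B j * B i)
    (u v : Fin k → X)
    (hu : Dense {x : X | ∃ p : Fin k → MvPolynomial (Fin m) ℂ, x = ∑ j, evalT A (p j) (u j)})
    (hv : Dense {x : X | ∃ p : Fin k → MvPolynomial (Fin m) ℂ, x = ∑ j, evalT B (p j) (v j)})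
    (c : ℝ) (hc : 0 < c)
    (hineq : ∀ p : Fin k → MvPolynomial (Fin m) ℂ,
      c⁻¹ * ‖∑ j, evalT B (p j) (v j)‖ ≤ ‖∑ j, evalT A (p j) (u j)‖ ∧
      ‖∑ j, evalT A (p j) (u j)‖ ≤ c * ‖∑ j, evalT B (p j) (v j)‖) :
    ∃ S : X ≃L[ℂ] X, ∀ ℓ, (S : X →L[ℂ] X) ∘L A ℓ = B ℓ ∘L (S : X →L[ℂ] X) := by
  set Q := Qmap A u with hQ
  set T := Qmap B v with hT
  have hQapp : ∀ p, Q p = ∑ j, evalT A (p j) (u j) := fun p => rfl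
  have hTapp : ∀ p, T p = ∑ j, evalT B (p j) (v j) := fun p => rfl
  -- norm bounds
  have hTQ : ∀ p, ‖T p‖ ≤ c * ‖Q p‖ := by
    intro p
    have h1 := (hineq p).1
    rw [← hQapp, ← hTapp] at h1
    calc ‖T p‖ = c * (c⁻¹ * ‖T p‖) := by field_simp
      _ ≤ c * ‖Q p‖ := by nlinarith
  have hQT : ∀ p, ‖Q p‖ ≤ c * ‖T p‖ := by
    intro p
    have h2 := (hineq p).2
    rw [← hQapp, ← hTapp] at h2
    exact h2
  -- dense ranges
  have huD : Dense ((LinearMap.range Q : Submodule ℂ X) : Set X) := by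
    convert hu using 1
    ext x
    simp only [SetLike.mem_coe, LinearMap.mem_range, Set.mem_setOf_eq]
    exact ⟨fun ⟨p, hp⟩ => ⟨p, hp.symm⟩, fun ⟨p, hp⟩ => ⟨p, hp.symm⟩⟩
  have hvD : Dense ((LinearMap.range T : Submodule ℂ X) : Set X) := by
    convert hv using 1
    ext x
    simp only [SetLike.mem_coe, LinearMap.mem_range, Set.mem_setOf_eq]
    exact ⟨fun ⟨p, hp⟩ => ⟨p, hp.symm⟩, fun ⟨p, hp⟩ => ⟨p, hp.symm⟩⟩
  obtain ⟨S₀, hS₀⟩ := factor_exists Q T c hTQ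
  obtain ⟨R₀, hR₀⟩ := factor_exists T Q c hQT
  -- extensions
  have hQdense : DenseRange ((LinearMap.range Q).subtypeL) := by
    rw [DenseRange]
    convert huD using 1
    exact Subtype.range_coe
  have hTdense : DenseRange ((LinearMap.range T).subtypeL) := by
    rw [DenseRange]
    convert hvD using 1
    exact Subtype.range_coe
  have hQui : IsUniformInducing ((LinearMap.range Q).subtypeL) :=
    isometry_subtype_coe.isUniformInducing
  have hTui : IsUniformInducing ((LinearMap.range T).subtypeL) :=
    isometry_subtype_coe.isUniformInducing
  set S : X →L[ℂ] X := S₀.extend (LinearMap.range Q).subtypeL with hS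
  set R : X →L[ℂ] X := R₀.extend (LinearMap.range T).subtypeL with hR
  have hSQ : ∀ p, S (Q p) = T p := by
    intro p
    have := ContinuousLinearMap.extend_eq S₀ hQdense hQui
      ⟨Q p, LinearMap.mem_range_self Q p⟩
    rw [← hS] at this
    rw [show (LinearMap.range Q).subtypeL ⟨Q p, LinearMap.mem_range_self Q p⟩ = Q p from rfl]
      at this
    rw [this, hS₀]
  have hRT : ∀ p, R (T p) = Q p := by
    intro p
    have := ContinuousLinearMap.extend_eq R₀ hTdense hTui
      ⟨T p, LinearMap.mem_range_self T p⟩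
    rw [← hR] at this
    rw [show (LinearMap.range T).subtypeL ⟨T p, LinearMap.mem_range_self T p⟩ = T p from rfl]
      at this
    rw [this, hR₀]
  -- inverses
  have hRS : ∀ x, R (S x) = x := by
    have : Set.EqOn (⇑R ∘ ⇑S) id ((LinearMap.range Q : Submodule ℂ X) : Set X) := by
      rintro x ⟨p, rfl⟩
      simp [hSQ, hRT]
    have heq := Continuous.ext_on huD (R.continuous.comp S.continuous) continuous_id this
    intro x; exact congrFun heq x
  have hSR : ∀ x, S (R x) = x := by
    have : Set.EqOn (⇑S ∘ ⇑R) id ((LinearMap.range T : Submodule ℂ X) : Set X) := by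
      rintro x ⟨p, rfl⟩
      simp [hSQ, hRT]
    have heq := Continuous.ext_on hvD (S.continuous.comp R.continuous) continuous_id this
    intro x; exact congrFun heq x
  refine ⟨ContinuousLinearEquiv.equivOfInverse S R hRS hSR, fun ℓ => ?_⟩
  apply ContinuousLinearMap.ext
  intro x
  have key : Set.EqOn (⇑S ∘ ⇑(A ℓ)) (⇑(B ℓ) ∘ ⇑S)
      ((LinearMap.range Q : Submodule ℂ X) : Set X) := by
    rintro y ⟨p, rfl⟩
    simp only [Function.comp_apply]
    rw [← Qmap_X_mul A hA u ℓ p, hSQ, hSQ, Qmap_X_mul B hB v ℓ p]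
  have heq := Continuous.ext_on huD (S.continuous.comp (A ℓ).continuous)
    ((B ℓ).continuous.comp S.continuous) key
  simpa using congrFun heq x
end

section
/- Let X be a complex Banach space, A a commuting m-tuple with cyclic k-tuple U, and B a commuting m-tuple. Then B is simultaneously similar to A if and only if there exists a cyclic k-tuple V for B and a constant c > 0 such that c^{-1} ‖Σ_j p_j(B) v_j‖ ≤ ‖Σ_j p_j(A) u_j‖ ≤ c ‖Σ_j p_j(B) v_j‖ for all p_1,...,p_k ∈ ℂ[z_1,...,z_m]. -/
set_option synthInstance.maxHeartbeats 1000000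
set_option maxHeartbeats 1000000

namespace Stmt4Aux

open MvPolynomial

variable {m k : ℕ} {X : Type*} [NormedAddCommGroup X] [NormedSpace ℂ X]

/-- The polynomial calculus as an algebra hom, via the commutative subalgebra
generated by the commuting tuple. -/
noncomputable def Phi (A : Fin m → X →L[ℂ] X) (hA : ∀ i j, A i * A j = A j * A i) :
    MvPolynomial (Fin m) ℂ →ₐ[ℂ] (X →L[ℂ] X) :=
  letI : CommSemiring (Algebra.adjoin ℂ (Set.range A)) :=
    Algebra.adjoinCommSemiringOfComm ℂ (by
      rintro a ⟨i, rfl⟩ b ⟨j, rfl⟩; exact hA i j)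
  (Algebra.adjoin ℂ (Set.range A)).val.comp
    (MvPolynomial.aeval fun i =>
      (⟨A i, Algebra.subset_adjoin (Set.mem_range_self i)⟩ : Algebra.adjoin ℂ (Set.range A)))

lemma evalT_eq (A : Fin m → X →L[ℂ] X) (hA : ∀ i j, A i * A j = A j * A i)
    (p : MvPolynomial (Fin m) ℂ) : evalT A p = Phi A hA p := by
  letI : CommSemiring (Algebra.adjoin ℂ (Set.range A)) :=
    Algebra.adjoinCommSemiringOfComm ℂ (by
      rintro a ⟨i, rfl⟩ b ⟨j, rfl⟩; exact hA i j)
  set A' : Fin m → Algebra.adjoin ℂ (Set.range A) := fun i =>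
    ⟨A i, Algebra.subset_adjoin (Set.mem_range_self i)⟩ with hA'
  have : Phi A hA p = (Algebra.adjoin ℂ (Set.range A)).val (MvPolynomial.aeval A' p) := rfl
  rw [this, aeval_def, eval₂_eq', map_sum, evalT]
  refine Finset.sum_congr rfl fun d _ => ?_
  have h1 : ((Algebra.adjoin ℂ (Set.range A)).val) (∏ i, A' i ^ d i)
      = ((List.finRange m).map fun i => A i ^ d i).prod := by
    rw [Fin.prod_univ_def, map_list_prod, List.map_map]
    congr 1
  rw [map_mul, h1, AlgHom.commutes, ← Algebra.smul_def]

lemma Phi_X (A : Fin m → X →L[ℂ] X) (hA : ∀ i j, A i * A j = A j * A i) (i : Fin m) :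
    Phi A hA (MvPolynomial.X i) = A i := by
  letI : CommSemiring (Algebra.adjoin ℂ (Set.range A)) :=
    Algebra.adjoinCommSemiringOfComm ℂ (by
      rintro a ⟨i, rfl⟩ b ⟨j, rfl⟩; exact hA i j)
  show ((Algebra.adjoin ℂ (Set.range A)).val) (MvPolynomial.aeval _ (MvPolynomial.X i)) = A i
  rw [aeval_X]
  rfl

/-- `p ↦ Σ_j p_j(A) u_j` as a linear map. -/
noncomputable def sumMap (A : Fin m → X →L[ℂ] X) (hA : ∀ i j, A i * A j = A j * A i)
    (u : Fin k → X) : (Fin k → MvPolynomial (Fin m) ℂ) →ₗ[ℂ] X where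
  toFun p := ∑ j, Phi A hA (p j) (u j)
  map_add' p q := by
    simp [ContinuousLinearMap.add_apply, Finset.sum_add_distrib]
  map_smul' c p := by
    simp [Finset.smul_sum]

lemma sumMap_apply (A : Fin m → X →L[ℂ] X) (hA : ∀ i j, A i * A j = A j * A i)
    (u : Fin k → X) (p : Fin k → MvPolynomial (Fin m) ℂ) :
    (∑ j, evalT A (p j) (u j)) = sumMap A hA u p := by
  simp [sumMap, evalT_eq A hA]

lemma set_eq (A : Fin m → X →L[ℂ] X) (hA : ∀ i j, A i * A j = A j * A i) (u : Fin k → X) :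
    {x : X | ∃ p : Fin k → MvPolynomial (Fin m) ℂ, x = ∑ j, evalT A (p j) (u j)}
      = ↑(LinearMap.range (sumMap A hA u)) := by
  ext x
  simp only [Set.mem_setOf_eq, SetLike.mem_coe, LinearMap.mem_range]
  constructor
  · rintro ⟨p, rfl⟩; exact ⟨p, (sumMap_apply A hA u p).symm⟩
  · rintro ⟨p, rfl⟩; exact ⟨p, (sumMap_apply A hA u p).symm⟩

lemma sumMap_Xmul (A : Fin m → X →L[ℂ] X) (hA : ∀ i j, A i * A j = A j * A i)
    (u : Fin k → X) (i : Fin m) (p : Fin k → MvPolynomial (Fin m) ℂ) :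
    A i (sumMap A hA u p) = sumMap A hA u (fun j => MvPolynomial.X i * p j) := by
  simp only [sumMap, LinearMap.coe_mk, AddHom.coe_mk, map_sum, map_mul, Phi_X A hA,
    ContinuousLinearMap.mul_apply]

/-- Extension of a densely-defined dominated linear map to a bounded operator. -/
lemma exists_clm {P : Type*} [AddCommGroup P] [Module ℂ P] {X : Type*} [NormedAddCommGroup X]
    [NormedSpace ℂ X] [CompleteSpace X] (α β : P →ₗ[ℂ] X) (c : ℝ)
    (hle : ∀ p, ‖β p‖ ≤ c * ‖α p‖)
    (hdense : Dense (↑(LinearMap.range α) : Set X)) :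
    ∃ S : X →L[ℂ] X, ∀ p, S (α p) = β p := by
  have hker : LinearMap.ker α ≤ LinearMap.ker β := by
    intro p hp
    rw [LinearMap.mem_ker] at hp ⊢
    have h := hle p
    rw [hp, norm_zero, mul_zero] at h
    exact norm_le_zero_iff.mp h
  set M := LinearMap.range α with hM
  let e := LinearMap.quotKerEquivRange α
  let g : M →ₗ[ℂ] X := (Submodule.liftQ (LinearMap.ker α) β hker).comp e.symm.toLinearMap
  have hg : ∀ (p : P) (h : α p ∈ M), g ⟨α p, h⟩ = β p := by
    intro p h
    have h1 : e.symm ⟨α p, h⟩ = Submodule.Quotient.mk p := by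
      rw [LinearEquiv.symm_apply_eq]
      exact Subtype.ext (LinearMap.quotKerEquivRange_apply_mk α p).symm
    simp only [g, LinearMap.comp_apply, LinearEquiv.coe_toLinearMap, h1, Submodule.liftQ_apply]
  have hb : ∀ x : M, ‖g x‖ ≤ c * ‖x‖ := by
    rintro ⟨x, p, rfl⟩
    rw [hg p ⟨p, rfl⟩]
    exact hle p
  let G := LinearMap.mkContinuous g c hb
  have hiso : Isometry (⇑M.subtypeL) := fun x y => rfl
  have hui : IsUniformInducing (⇑M.subtypeL) := hiso.isUniformInducing
  have hdr : DenseRange (⇑M.subtypeL) := by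
    have hr : Set.range (⇑M.subtypeL) = (↑M : Set X) := Subtype.range_coe
    rw [DenseRange, hr]
    exact hdense
  refine ⟨G.extend M.subtypeL, fun p => ?_⟩
  have hx : α p = M.subtypeL ⟨α p, ⟨p, rfl⟩⟩ := rfl
  rw [hx, ContinuousLinearMap.extend_eq (e := M.subtypeL) G hdr hui]
  show g ⟨α p, ⟨p, rfl⟩⟩ = β p
  exact hg p ⟨p, rfl⟩

/-- Conjugation by a continuous linear equivalence, as an algebra hom. -/
noncomputable def conjAlg (S : X ≃L[ℂ] X) : (X →L[ℂ] X) →ₐ[ℂ] (X →L[ℂ] X) where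
  toFun T := (S : X →L[ℂ] X) ∘L T ∘L (S.symm : X →L[ℂ] X)
  map_one' := by ext x; simp
  map_mul' T₁ T₂ := by
    ext x
    simp [ContinuousLinearMap.mul_apply]
  map_zero' := by ext x; simp
  map_add' T₁ T₂ := by ext x; simp
  commutes' c := by
    ext x
    simp [Algebra.algebraMap_eq_smul_one]

end Stmt4Aux

open Stmt4Aux in
theorem stmt4 {m k : ℕ} {X : Type*} [NormedAddCommGroup X] [NormedSpace ℂ X] [CompleteSpace X]
    (A B : Fin m → X →L[ℂ] X)
    (hA : ∀ i j, A i * A j = A j * A i) (hB : ∀ i j, B i * B j = B j * B i)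
    (u : Fin k → X)
    (hu : Dense {x : X | ∃ p : Fin k → MvPolynomial (Fin m) ℂ, x = ∑ j, evalT A (p j) (u j)}) :
    (∃ S : X ≃L[ℂ] X, ∀ j, B j = (S : X →L[ℂ] X) ∘L A j ∘L (S.symm : X →L[ℂ] X)) ↔
    ∃ v : Fin k → X,
      Dense {x : X | ∃ p : Fin k → MvPolynomial (Fin m) ℂ, x = ∑ j, evalT B (p j) (v j)} ∧
      ∃ c : ℝ, 0 < c ∧ ∀ p : Fin k → MvPolynomial (Fin m) ℂ,
        c⁻¹ * ‖∑ j, evalT B (p j) (v j)‖ ≤ ‖∑ j, evalT A (p j) (u j)‖ ∧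
        ‖∑ j, evalT A (p j) (u j)‖ ≤ c * ‖∑ j, evalT B (p j) (v j)‖ := by
  constructor
  · rintro ⟨S, hS⟩
    have key : ∀ p : MvPolynomial (Fin m) ℂ,
        Phi B hB p = (S : X →L[ℂ] X) ∘L Phi A hA p ∘L (S.symm : X →L[ℂ] X) := by
      have h : (conjAlg S).comp (Phi A hA) = Phi B hB :=
        MvPolynomial.algHom_ext fun i => by
          simp only [AlgHom.comp_apply, Phi_X]
          show conjAlg S (A i) = B i
          rw [hS i]; rfl
      intro p
      rw [← h]
      rfl
    have hSsum : ∀ p : Fin k → MvPolynomial (Fin m) ℂ,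
        (∑ j, evalT B (p j) (S (u j))) = S (∑ j, evalT A (p j) (u j)) := by
      intro p
      rw [map_sum]
      refine Finset.sum_congr rfl fun j _ => ?_
      rw [evalT_eq B hB, key, evalT_eq A hA]
      simp
    refine ⟨fun j => S (u j), ?_, ?_⟩
    · have himg : {x : X | ∃ p : Fin k → MvPolynomial (Fin m) ℂ,
          x = ∑ j, evalT B (p j) (S (u j))}
          = ⇑S '' {x : X | ∃ p : Fin k → MvPolynomial (Fin m) ℂ,
              x = ∑ j, evalT A (p j) (u j)} := by
        ext x
        constructor
        · rintro ⟨p, rfl⟩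
          exact ⟨∑ j, evalT A (p j) (u j), ⟨p, rfl⟩, (hSsum p).symm⟩
        · rintro ⟨y, ⟨p, rfl⟩, rfl⟩
          exact ⟨p, (hSsum p).symm⟩
      rw [himg]
      have hdr : DenseRange (⇑S) := S.surjective.denseRange
      exact hdr.dense_image S.continuous hu
    · set c : ℝ := max (max ‖(S : X →L[ℂ] X)‖ ‖(S.symm : X →L[ℂ] X)‖) 1 with hc
      have hc1 : (1 : ℝ) ≤ c := le_max_right _ _
      have hc0 : 0 < c := lt_of_lt_of_le one_pos hc1
      have hub : ∀ x : X, ‖S x‖ ≤ c * ‖x‖ := fun x =>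
        le_trans ((S : X →L[ℂ] X).le_opNorm x)
          (mul_le_mul_of_nonneg_right (le_trans (le_max_left _ _) (le_max_left _ _)) (norm_nonneg x))
      have hlb : ∀ x : X, ‖x‖ ≤ c * ‖S x‖ := by
        intro x
        have h1 : ‖S.symm (S x)‖ ≤ c * ‖S x‖ :=
          le_trans ((S.symm : X →L[ℂ] X).le_opNorm (S x))
            (mul_le_mul_of_nonneg_right (le_trans (le_max_right _ _) (le_max_left _ _))
              (norm_nonneg _))
        rwa [S.symm_apply_apply] at h1
      refine ⟨c, hc0, fun p => ?_⟩
      rw [hSsum p]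
      set x := ∑ j, evalT A (p j) (u j)
      refine ⟨?_, hlb x⟩
      rw [inv_mul_le_iff₀ hc0]
      exact hub x
  · rintro ⟨v, hv, c, hc, hineq⟩
    set α := sumMap A hA u with hα
    set β := sumMap B hB v with hβ
    have hdA : Dense (↑(LinearMap.range α) : Set X) := by rw [← set_eq A hA u]; exact hu
    have hdB : Dense (↑(LinearMap.range β) : Set X) := by rw [← set_eq B hB v]; exact hv
    have hAB : ∀ p, ‖α p‖ ≤ c * ‖β p‖ := by
      intro p
      have := (hineq p).2
      rwa [sumMap_apply A hA u p, sumMap_apply B hB v p] at this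
    have hBA : ∀ p, ‖β p‖ ≤ c * ‖α p‖ := by
      intro p
      have := (hineq p).1
      rw [sumMap_apply A hA u p, sumMap_apply B hB v p] at this
      rwa [inv_mul_le_iff₀ hc] at this
    obtain ⟨S₀, hS₀⟩ := exists_clm α β c hBA hdA
    obtain ⟨T₀, hT₀⟩ := exists_clm β α c hAB hdB
    have hTS : ∀ x, T₀ (S₀ x) = x := by
      have heq : (⇑T₀ ∘ ⇑S₀) = id := by
        refine Continuous.ext_on hdA (T₀.continuous.comp S₀.continuous) continuous_id ?_
        rintro x ⟨p, rfl⟩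
        simp [hS₀ p, hT₀ p]
      exact fun x => congrFun heq x
    have hST : ∀ x, S₀ (T₀ x) = x := by
      have heq : (⇑S₀ ∘ ⇑T₀) = id := by
        refine Continuous.ext_on hdB (S₀.continuous.comp T₀.continuous) continuous_id ?_
        rintro x ⟨p, rfl⟩
        simp [hS₀ p, hT₀ p]
      exact fun x => congrFun heq x
    let S : X ≃L[ℂ] X := ContinuousLinearEquiv.equivOfInverse S₀ T₀ hTS hST
    have hScoe : ∀ x, S x = S₀ x := fun x => rfl
    have hSsymm : ∀ x, S.symm x = T₀ x := fun x => rfl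
    refine ⟨S, fun j => ?_⟩
    have hcomm : ∀ x, S₀ (A j x) = B j (S₀ x) := by
      have heq : (⇑S₀ ∘ ⇑(A j)) = (⇑(B j) ∘ ⇑S₀) := by
        refine Continuous.ext_on hdA (S₀.continuous.comp (A j).continuous)
          ((B j).continuous.comp S₀.continuous) ?_
        rintro x ⟨p, rfl⟩
        show S₀ (A j (α p)) = B j (S₀ (α p))
        rw [hα, sumMap_Xmul A hA u j p, ← hα]
        rw [hS₀, hS₀, hβ, ← sumMap_Xmul B hB v j p]
      exact fun x => congrFun heq x
    ext x
    show B j x = S (A j (S.symm x))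
    rw [hScoe, hSsymm, hcomm (T₀ x), hST x]
end

section
/- Let A = (A_1,...,A_m) and B = (B_1,...,B_m) be commuting m-tuples of N×N complex matrices, and suppose A is k-cyclic with respect to U = (u_1,...,u_k) (i.e., the vectors Σ_j p_j(A)u_j span ℂ^N). Then B is simultaneously similar to A if and only if there exists a cyclic k-tuple V = (v_1,...,v_k) for B such that for all polynomials p_1,...,p_k ∈ ℂ[z_1,...,z_m], Σ_j p_j(A)u_j = 0 ⟺ Σ_j p_j(B)v_j = 0. -/
/-- Polynomial functional calculus for a tuple of `N × N` matrices:
`p(A) = Σ_d coeff_d • A₁^{d₁} ⋯ A_m^{d_m}`. -/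
noncomputable def evalM {m N : ℕ} (A : Fin m → Matrix (Fin N) (Fin N) ℂ)
    (p : MvPolynomial (Fin m) ℂ) : Matrix (Fin N) (Fin N) ℂ :=
  ∑ d ∈ p.support, p.coeff d • ((List.finRange m).map fun i => A i ^ d i).prod

/-!
Both sides compare the linear maps `p ↦ Σ_j p_j(A) u_j` from `ℂ[z]^k` onto `ℂ^N`. A similarity
`S` intertwines `p(A)` and `p(B)`, so `v_j = S u_j` works. Conversely, two surjections with the
same kernel differ by a linear isomorphism `S` of `ℂ^N`, i.e. `S (Σ p_j(A) u_j) = Σ p_j(B) v_j`;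
replacing every `p_j` by `z_i p_j` gives `S A_i = B_i S`, because for a commuting tuple
`p ↦ p(A)` is an algebra homomorphism.
-/

open MvPolynomial Matrix

theorem SemiconjBy.list_prod_map {M ι : Type*} [Monoid M] {a : M} {f g : ι → M} {l : List ι}
    (h : ∀ i ∈ l, SemiconjBy a (f i) (g i)) : SemiconjBy a (l.map f).prod (l.map g).prod := by
  induction l with
  | nil => exact SemiconjBy.one_right a
  | cons i l ih =>
    simp only [List.map_cons, List.prod_cons]
    exact (h i List.mem_cons_self).mul_right (ih fun j hj => h j (List.mem_cons_of_mem i hj))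

theorem LinearMap.exists_linearEquiv_apply_eq_of_ker_eq {R M M₂ M₃ : Type*} [Ring R]
    [AddCommGroup M] [AddCommGroup M₂] [AddCommGroup M₃] [Module R M] [Module R M₂] [Module R M₃]
    {f : M →ₗ[R] M₂} {g : M →ₗ[R] M₃} (hf : Function.Surjective f) (hg : Function.Surjective g)
    (h : LinearMap.ker f = LinearMap.ker g) : ∃ e : M₂ ≃ₗ[R] M₃, ∀ x, e (f x) = g x :=
  ⟨(f.quotKerEquivOfSurjective hf).symm ≪≫ₗ Submodule.quotEquivOfEq _ _ h ≪≫ₗ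
      g.quotKerEquivOfSurjective hg,
    fun x => by simp⟩

theorem Matrix.semiconjBy_iff_eq_mul_mul_inv {n R : Type*} [Fintype n] [DecidableEq n]
    [CommRing R] {S A B : Matrix n n R} (hS : IsUnit S) : SemiconjBy S A B ↔ B = S * A * S⁻¹ := by
  obtain ⟨U, rfl⟩ := hS
  rw [← coe_units_inv, Units.eq_mul_inv_iff_mul_eq, SemiconjBy, eq_comm]

section

variable {m N k : ℕ} {A B : Fin m → Matrix (Fin N) (Fin N) ℂ} {S : Matrix (Fin N) (Fin N) ℂ}

variable (A) in
noncomputable def evalMₗ : MvPolynomial (Fin m) ℂ →ₗ[ℂ] Matrix (Fin N) (Fin N) ℂ :=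
  Finsupp.linearCombination ℂ
      (fun d : Fin m →₀ ℕ => ((List.finRange m).map fun i => A i ^ d i).prod) ∘ₗ
    (AddMonoidAlgebra.coeffLinearEquiv ℂ).toLinearMap

theorem evalMₗ_apply (p : MvPolynomial (Fin m) ℂ) : evalMₗ A p = evalM A p := rfl

theorem semiconjBy_evalM (h : ∀ i, SemiconjBy S (A i) (B i)) (p : MvPolynomial (Fin m) ℂ) :
    SemiconjBy S (evalM A p) (evalM B p) := by
  simp only [evalM, SemiconjBy, Finset.mul_sum, Finset.sum_mul, mul_smul_comm, smul_mul_assoc]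
  exact Finset.sum_congr rfl fun d _ =>
    congrArg _ (SemiconjBy.list_prod_map fun i _ => (h i).pow_right _)

theorem exists_algHom_eq_evalM (hA : ∀ i j, Commute (A i) (A j)) :
    ∃ φ : MvPolynomial (Fin m) ℂ →ₐ[ℂ] Matrix (Fin N) (Fin N) ℂ,
      (∀ i, φ (X i) = A i) ∧ ⇑φ = evalM A := by
  -- `aeval` needs a commutative target: evaluate in the subalgebra generated by the `A i`.
  have hcomm : ∀ a ∈ Set.range A, ∀ b ∈ Set.range A, a * b = b * a := by
    rintro _ ⟨i, rfl⟩ _ ⟨j, rfl⟩; exact hA i j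
  have := Algebra.isMulCommutative_adjoin ℂ hcomm
  open scoped IsMulCommutative in
  let a : Fin m → Algebra.adjoin ℂ (Set.range A) := fun i => ⟨A i, Algebra.subset_adjoin ⟨i, rfl⟩⟩
  refine ⟨(Algebra.adjoin ℂ (Set.range A)).val.comp (aeval a), fun i => by simp [a],
    funext fun p => ?_⟩
  rw [AlgHom.comp_apply, aeval_def, eval₂_eq', map_sum]
  refine Finset.sum_congr rfl fun d _ => ?_
  rw [map_mul, Algebra.algebraMap_eq_smul_one, map_smul, map_one, smul_mul_assoc, one_mul,
    Fin.prod_univ_def, map_list_prod, List.map_map]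
  rfl

theorem evalM_X_mul (hA : ∀ i j, Commute (A i) (A j)) (i : Fin m) (p : MvPolynomial (Fin m) ℂ) :
    evalM A (X i * p) = A i * evalM A p := by
  obtain ⟨φ, hφX, hφ⟩ := exists_algHom_eq_evalM hA
  rw [← hφ, map_mul, hφX]

variable (A) in
noncomputable def polyCombination (u : Fin k → Fin N → ℂ) :
    (Fin k → MvPolynomial (Fin m) ℂ) →ₗ[ℂ] Fin N → ℂ where
  toFun p := ∑ j, evalM A (p j) *ᵥ u j
  map_add' p q := by
    simp only [Pi.add_apply, ← evalMₗ_apply, map_add, add_mulVec, Finset.sum_add_distrib]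
  map_smul' c p := by
    simp only [Pi.smul_apply, ← evalMₗ_apply, map_smul, smul_mulVec, Finset.smul_sum,
      RingHom.id_apply]

@[simp]
theorem polyCombination_apply (u : Fin k → Fin N → ℂ) (p : Fin k → MvPolynomial (Fin m) ℂ) :
    polyCombination A u p = ∑ j, evalM A (p j) *ᵥ u j :=
  rfl

variable (A) in
theorem surjective_polyCombination_iff (u : Fin k → Fin N → ℂ) :
    Function.Surjective (polyCombination A u) ↔
      {x | ∃ p : Fin k → MvPolynomial (Fin m) ℂ, x = ∑ j, evalM A (p j) *ᵥ u j} = Set.univ := by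
  rw [Set.eq_univ_iff_forall]
  exact forall_congr' fun x => exists_congr fun p => eq_comm

theorem polyCombination_X_mul (hA : ∀ i j, Commute (A i) (A j)) (u : Fin k → Fin N → ℂ)
    (i : Fin m) (p : Fin k → MvPolynomial (Fin m) ℂ) :
    polyCombination A u (fun j => X i * p j) = A i *ᵥ polyCombination A u p := by
  simp [evalM_X_mul hA, mulVec_sum, mulVec_mulVec]

theorem polyCombination_mulVec (h : ∀ i, SemiconjBy S (A i) (B i)) (u : Fin k → Fin N → ℂ)
    (p : Fin k → MvPolynomial (Fin m) ℂ) :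
    polyCombination B (fun j => S *ᵥ u j) p = S *ᵥ polyCombination A u p := by
  simp [mulVec_sum, mulVec_mulVec, (semiconjBy_evalM h _).eq]

theorem surjective_polyCombination_mulVec (hS : IsUnit S) (h : ∀ i, SemiconjBy S (A i) (B i))
    {u : Fin k → Fin N → ℂ} (hu : Function.Surjective (polyCombination A u)) :
    Function.Surjective (polyCombination B (fun j => S *ᵥ u j)) := by
  intro x
  obtain ⟨y, rfl⟩ := mulVec_surjective_iff_isUnit.2 hS x
  obtain ⟨p, rfl⟩ := hu y
  exact ⟨p, polyCombination_mulVec h u p⟩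

theorem ker_polyCombination_mulVec (hS : IsUnit S) (h : ∀ i, SemiconjBy S (A i) (B i))
    (u : Fin k → Fin N → ℂ) :
    LinearMap.ker (polyCombination B (fun j => S *ᵥ u j)) =
      LinearMap.ker (polyCombination A u) := by
  ext p
  rw [LinearMap.mem_ker, LinearMap.mem_ker, polyCombination_mulVec h,
    (mulVec_injective_iff_isUnit.2 hS).eq_iff' (mulVec_zero S)]

theorem exists_isUnit_semiconjBy_of_ker_eq (hA : ∀ i j, Commute (A i) (A j))
    (hB : ∀ i j, Commute (B i) (B j)) {u v : Fin k → Fin N → ℂ}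
    (hu : Function.Surjective (polyCombination A u))
    (hv : Function.Surjective (polyCombination B v))
    (hker : LinearMap.ker (polyCombination A u) = LinearMap.ker (polyCombination B v)) :
    ∃ S : Matrix (Fin N) (Fin N) ℂ, IsUnit S ∧ ∀ i, SemiconjBy S (A i) (B i) := by
  obtain ⟨e, he⟩ := LinearMap.exists_linearEquiv_apply_eq_of_ker_eq hu hv hker
  refine ⟨LinearMap.toMatrix' e, LinearMap.isUnit_toMatrix'_iff.2 ?_, fun i => ?_⟩
  · exact (Module.End.isUnit_iff _).2 e.bijective
  · apply Matrix.toLin'.injective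
    refine LinearMap.ext fun x => ?_
    obtain ⟨p, rfl⟩ := hu x
    simp only [Matrix.toLin'_apply, ← mulVec_mulVec, LinearMap.toMatrix'_mulVec,
      LinearEquiv.coe_coe, ← polyCombination_X_mul hA, ← polyCombination_X_mul hB, he]

end

theorem stmt6 {m N k : ℕ}
    (A B : Fin m → Matrix (Fin N) (Fin N) ℂ)
    (hA : ∀ i j, A i * A j = A j * A i) (hB : ∀ i j, B i * B j = B j * B i)
    (u : Fin k → (Fin N → ℂ))
    (hu : {x : Fin N → ℂ | ∃ p : Fin k → MvPolynomial (Fin m) ℂ,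
        x = ∑ j, (evalM A (p j)).mulVec (u j)} = Set.univ) :
    (∃ S : Matrix (Fin N) (Fin N) ℂ, IsUnit S ∧ ∀ j, B j = S * A j * S⁻¹) ↔
    ∃ v : Fin k → (Fin N → ℂ),
      {x : Fin N → ℂ | ∃ p : Fin k → MvPolynomial (Fin m) ℂ,
          x = ∑ j, (evalM B (p j)).mulVec (v j)} = Set.univ ∧
      ∀ p : Fin k → MvPolynomial (Fin m) ℂ,
        (∑ j, (evalM A (p j)).mulVec (u j) = 0 ↔ ∑ j, (evalM B (p j)).mulVec (v j) = 0) := by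
  rw [← surjective_polyCombination_iff] at hu
  have ker_eq_iff : ∀ v : Fin k → Fin N → ℂ,
      LinearMap.ker (polyCombination A u) = LinearMap.ker (polyCombination B v) ↔
        ∀ p : Fin k → MvPolynomial (Fin m) ℂ,
          (∑ j, evalM A (p j) *ᵥ u j = 0 ↔ ∑ j, evalM B (p j) *ᵥ v j = 0) := fun v => by
    simp only [SetLike.ext_iff, LinearMap.mem_ker, polyCombination_apply]
  constructor
  · rintro ⟨S, hS, hBA⟩
    have h i := (Matrix.semiconjBy_iff_eq_mul_mul_inv hS).2 (hBA i)
    refine ⟨fun j => S *ᵥ u j, (surjective_polyCombination_iff B _).1 ?_, (ker_eq_iff _).1 ?_⟩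
    · exact surjective_polyCombination_mulVec hS h hu
    · exact (ker_polyCombination_mulVec hS h u).symm
  · rintro ⟨v, hv, hker⟩
    obtain ⟨S, hS, h⟩ := exists_isUnit_semiconjBy_of_ker_eq hA hB hu
      ((surjective_polyCombination_iff B v).2 hv) ((ker_eq_iff v).2 hker)
    exact ⟨S, hS, fun i => (Matrix.semiconjBy_iff_eq_mul_mul_inv hS).1 (h i)⟩
end

section
/- Two m-tuples of commuting N×N complex matrices A = (A_1,...,A_m) and B = (B_1,...,B_m) are simultaneously similar if and only if there exists a basis (v_1,...,v_N) of ℂ^N such that { (p_1,...,p_N) ∈ ℂ[z_1,...,z_m]^N : Σ_{j=1}^N p_j(A)e_j = 0 } = { (p_1,...,p_N) : Σ_{j=1}^N p_j(B)v_j = 0 }, where (e_1,...,e_N) is the standard basis of ℂ^N. -/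
namespace Stmt7Aux

variable {m N : ℕ}

/-- The monomial part of `evalM`. -/
noncomputable def L (A : Fin m → Matrix (Fin N) (Fin N) ℂ) (d : Fin m →₀ ℕ) :
    Matrix (Fin N) (Fin N) ℂ :=
  ((List.finRange m).map fun i => A i ^ d i).prod

lemma evalM_eq_sum (A : Fin m → Matrix (Fin N) (Fin N) ℂ) (p : MvPolynomial (Fin m) ℂ)
    (D : Finset (Fin m →₀ ℕ)) (hD : p.support ⊆ D) :
    evalM A p = ∑ d ∈ D, p.coeff d • L A d := by
  rw [evalM]
  exact Finset.sum_subset hD (fun d _ h => by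
    rw [MvPolynomial.notMem_support_iff.mp h, zero_smul])

lemma evalM_sub (A : Fin m → Matrix (Fin N) (Fin N) ℂ) (p q : MvPolynomial (Fin m) ℂ) :
    evalM A (p - q) = evalM A p - evalM A q := by
  set D := p.support ∪ q.support ∪ (p - q).support with hDdef
  rw [evalM_eq_sum A (p - q) D (by intro d hd; simp [hDdef, hd]),
    evalM_eq_sum A p D (by intro d hd; simp [hDdef, hd]),
    evalM_eq_sum A q D (by intro d hd; simp [hDdef, hd]), ← Finset.sum_sub_distrib]
  refine Finset.sum_congr rfl fun d _ => ?_
  rw [MvPolynomial.coeff_sub, sub_smul]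

lemma L_single (A : Fin m → Matrix (Fin N) (Fin N) ℂ) (j : Fin m) :
    L A (Finsupp.single j 1) = A j := by
  have key : ∀ l : List (Fin m), l.Nodup →
      ((l.map fun i => A i ^ (Finsupp.single j 1 : Fin m →₀ ℕ) i).prod
        = if j ∈ l then A j else 1) := by
    intro l hl
    induction l with
    | nil => simp
    | cons a t ih =>
      rw [List.nodup_cons] at hl
      rw [List.map_cons, List.prod_cons, ih hl.2]
      by_cases h : j = a
      · subst h
        simp [Finsupp.single_apply, hl.1]
      · simp [Finsupp.single_apply, h, Ne.symm h]
  rw [L, key _ (List.nodup_finRange m)]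
  simp [List.mem_finRange]

lemma L_zero (A : Fin m → Matrix (Fin N) (Fin N) ℂ) : L A 0 = 1 := by
  rw [L]
  refine List.prod_eq_one fun x hx => ?_
  rcases List.mem_map.mp hx with ⟨i, _, rfl⟩
  simp

lemma evalM_X (A : Fin m → Matrix (Fin N) (Fin N) ℂ) (j : Fin m) :
    evalM A (MvPolynomial.X j) = A j := by
  rw [evalM_eq_sum A _ {Finsupp.single j 1} (by rw [MvPolynomial.support_X])]
  simp [L_single]

lemma evalM_C (A : Fin m → Matrix (Fin N) (Fin N) ℂ) (c : ℂ) :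
    evalM A (MvPolynomial.C c) = c • 1 := by
  by_cases hc : c = 0
  · subst hc
    simp [evalM]
  · rw [evalM_eq_sum A _ {0} ?_]
    · simp [L_zero]
    · rw [show (MvPolynomial.C c : MvPolynomial (Fin m) ℂ) = MvPolynomial.monomial 0 c from rfl,
        MvPolynomial.support_monomial]
      simp [hc]

lemma evalM_zero (A : Fin m → Matrix (Fin N) (Fin N) ℂ) : evalM A 0 = 0 := by
  simp [evalM]

lemma conj_pow (S X : Matrix (Fin N) (Fin N) ℂ) (h1 : S * S⁻¹ = 1) (h2 : S⁻¹ * S = 1)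
    (n : ℕ) : (S * X * S⁻¹) ^ n = S * X ^ n * S⁻¹ := by
  induction n with
  | zero => rw [pow_zero, pow_zero, mul_one, h1]
  | succ n ih =>
    rw [pow_succ, pow_succ, ih]
    calc S * X ^ n * S⁻¹ * (S * X * S⁻¹) = S * X ^ n * (S⁻¹ * S) * X * S⁻¹ := by
          noncomm_ring
      _ = S * (X ^ n * X) * S⁻¹ := by rw [h2]; noncomm_ring

lemma L_conj (S : Matrix (Fin N) (Fin N) ℂ) (h1 : S * S⁻¹ = 1) (h2 : S⁻¹ * S = 1)
    (A : Fin m → Matrix (Fin N) (Fin N) ℂ) (d : Fin m →₀ ℕ) :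
    L (fun i => S * A i * S⁻¹) d = S * L A d * S⁻¹ := by
  rw [L, L]
  induction (List.finRange m) with
  | nil => simp [h1]
  | cons a t ih =>
    rw [List.map_cons, List.prod_cons, List.map_cons, List.prod_cons, ih,
      conj_pow S (A a) h1 h2]
    calc S * A a ^ d a * S⁻¹ * (S * (t.map fun i => A i ^ d i).prod * S⁻¹)
        = S * A a ^ d a * (S⁻¹ * S) * (t.map fun i => A i ^ d i).prod * S⁻¹ := by
          noncomm_ring
      _ = S * (A a ^ d a * (t.map fun i => A i ^ d i).prod) * S⁻¹ := by
          rw [h2]; noncomm_ring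

lemma evalM_conj (S : Matrix (Fin N) (Fin N) ℂ) (h1 : S * S⁻¹ = 1) (h2 : S⁻¹ * S = 1)
    (A : Fin m → Matrix (Fin N) (Fin N) ℂ) (p : MvPolynomial (Fin m) ℂ) :
    evalM (fun i => S * A i * S⁻¹) p = S * evalM A p * S⁻¹ := by
  rw [evalM, evalM, Finset.mul_sum, Finset.sum_mul]
  refine Finset.sum_congr rfl fun d _ => ?_
  rw [show ((List.finRange m).map fun i => (S * A i * S⁻¹) ^ d i).prod
      = L (fun i => S * A i * S⁻¹) d from rfl, L_conj S h1 h2 A d]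
  rw [mul_smul_comm, smul_mul_assoc]
  rfl

/-- The key computation for the relation `X j • e_k - Σ_l (A j)_{l k} • e_l`. -/
lemma key_sum (Amat : Matrix (Fin N) (Fin N) ℂ) (Cmat : Fin m → Matrix (Fin N) (Fin N) ℂ)
    (w : Fin N → (Fin N → ℂ)) (j : Fin m) (k : Fin N) :
    ∑ l, (evalM Cmat (Pi.single k (MvPolynomial.X j) l - MvPolynomial.C (Amat l k))).mulVec (w l)
      = (Cmat j).mulVec (w k) - ∑ l, Amat l k • w l := by
  have hev : ∀ l, evalM Cmat (Pi.single k (MvPolynomial.X j) l - MvPolynomial.C (Amat l k))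
      = (if l = k then Cmat j else 0) - Amat l k • 1 := by
    intro l
    rw [evalM_sub, evalM_C]
    by_cases h : l = k
    · subst h; rw [Pi.single_eq_same, evalM_X, if_pos rfl]
    · rw [Pi.single_eq_of_ne h, evalM_zero, if_neg h]
  have : ∀ l, (evalM Cmat (Pi.single k (MvPolynomial.X j) l
        - MvPolynomial.C (Amat l k))).mulVec (w l)
      = (if l = k then (Cmat j).mulVec (w l) else 0) - Amat l k • w l := by
    intro l
    rw [hev l, Matrix.sub_mulVec]
    congr 1
    · split <;> simp [Matrix.zero_mulVec]
    · rw [Matrix.smul_mulVec, Matrix.one_mulVec]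
  simp_rw [this]
  rw [Finset.sum_sub_distrib, Finset.sum_ite_eq' Finset.univ k
    (fun l => (Cmat j).mulVec (w l)), if_pos (Finset.mem_univ k)]

lemma sum_smul_single (c : Fin N → ℂ) : ∑ l, c l • (Pi.single l 1 : Fin N → ℂ) = c := by
  ext i
  simp [Finset.sum_apply, Pi.single_apply]

end Stmt7Aux

open Stmt7Aux in
theorem stmt7 {m N : ℕ}
    (A B : Fin m → Matrix (Fin N) (Fin N) ℂ)
    (hA : ∀ i j, A i * A j = A j * A i) (hB : ∀ i j, B i * B j = B j * B i) :
    (∃ S : Matrix (Fin N) (Fin N) ℂ, IsUnit S ∧ ∀ j, B j = S * A j * S⁻¹) ↔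
    ∃ v : Module.Basis (Fin N) ℂ (Fin N → ℂ),
      {p : Fin N → MvPolynomial (Fin m) ℂ |
          ∑ j, (evalM A (p j)).mulVec (Pi.single j 1) = 0} =
      {p : Fin N → MvPolynomial (Fin m) ℂ |
          ∑ j, (evalM B (p j)).mulVec (v j) = 0} := by
  constructor
  · rintro ⟨S, hS, hSB⟩
    have hdet : IsUnit S.det := (Matrix.isUnit_iff_isUnit_det S).mp hS
    have h1 : S * S⁻¹ = 1 := Matrix.mul_nonsing_inv S hdet
    have h2 : S⁻¹ * S = 1 := Matrix.nonsing_inv_mul S hdet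
    have hinv : Invertible S := S.invertibleOfIsUnitDet hdet
    refine ⟨(Pi.basisFun ℂ (Fin N)).map (S.toLinearEquiv' hinv), ?_⟩
    have hv : ∀ k, ((Pi.basisFun ℂ (Fin N)).map (S.toLinearEquiv' hinv)) k
        = S.mulVec (Pi.single k 1) := by
      intro k
      rw [Module.Basis.map_apply, Pi.basisFun_apply]
      show Matrix.toLin' S _ = _
      rw [Matrix.toLin'_apply]
    ext p
    simp only [Set.mem_setOf_eq]
    have hBfun : B = fun i => S * A i * S⁻¹ := funext hSB
    have hkey : ∀ k, (evalM B (p k)).mulVec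
        (((Pi.basisFun ℂ (Fin N)).map (S.toLinearEquiv' hinv)) k)
        = S.mulVec ((evalM A (p k)).mulVec (Pi.single k 1)) := by
      intro k
      rw [hv k, hBfun, evalM_conj S h1 h2, Matrix.mulVec_mulVec,
        mul_assoc (S * evalM A (p k)) S⁻¹ S, h2, mul_one, ← Matrix.mulVec_mulVec]
    simp_rw [hkey]
    have hms : ∑ x : Fin N, S.mulVec ((evalM A (p x)).mulVec (Pi.single x 1))
        = S.mulVec (∑ x : Fin N, (evalM A (p x)).mulVec (Pi.single x 1)) := by
      simp_rw [← Matrix.mulVecLin_apply]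
      exact (map_sum S.mulVecLin _ Finset.univ).symm
    rw [hms]
    constructor
    · intro h; rw [h, Matrix.mulVec_zero]
    · intro h
      have := congrArg (S⁻¹.mulVec) h
      rwa [Matrix.mulVec_mulVec, h2, Matrix.one_mulVec, Matrix.mulVec_zero] at this
  · rintro ⟨v, hset⟩
    set S : Matrix (Fin N) (Fin N) ℂ := (Pi.basisFun ℂ (Fin N)).toMatrix v with hSdef
    have hinv : Invertible S := (Pi.basisFun ℂ (Fin N)).invertibleToMatrix v
    have hS : IsUnit S := isUnit_of_invertible S
    have hdet : IsUnit S.det := (Matrix.isUnit_iff_isUnit_det S).mp hS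
    have h1 : S * S⁻¹ = 1 := Matrix.mul_nonsing_inv S hdet
    have h2 : S⁻¹ * S = 1 := Matrix.nonsing_inv_mul S hdet
    have hScol : ∀ k i, S i k = v k i := by
      intro k i
      rw [hSdef, Module.Basis.toMatrix_apply, Pi.basisFun_repr]
    have hSe : ∀ k, S.mulVec (Pi.single k 1) = v k := by
      intro k
      ext i
      rw [Matrix.mulVec_single]
      simp [hScol]
    refine ⟨S, hS, fun j => ?_⟩
    have hcomm : ∀ k, (B j).mulVec (v k) = ∑ l, A j l k • v l := by
      intro k
      have hmemA : (fun l => (Pi.single k (MvPolynomial.X j) : Fin N → MvPolynomial (Fin m) ℂ) l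
          - MvPolynomial.C (A j l k)) ∈
          {p : Fin N → MvPolynomial (Fin m) ℂ |
            ∑ l, (evalM A (p l)).mulVec (Pi.single l 1) = 0} := by
        simp only [Set.mem_setOf_eq]
        rw [key_sum (A j) A (fun l => Pi.single l 1) j k, sum_smul_single (fun l => A j l k)]
        have : (A j).mulVec (Pi.single k 1) = fun i => A j i k := by
          ext i; rw [Matrix.mulVec_single]; simp
        rw [this, sub_self]
      rw [hset] at hmemA
      simp only [Set.mem_setOf_eq] at hmemA
      rw [key_sum (A j) B v j k] at hmemA
      exact sub_eq_zero.mp hmemA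
    have hmul : B j * S = S * A j := by
      have hk : ∀ k, (B j * S).mulVec (Pi.single k 1) = (S * A j).mulVec (Pi.single k 1) := by
        intro k
        rw [← Matrix.mulVec_mulVec, ← Matrix.mulVec_mulVec, hSe k, hcomm k]
        ext i
        simp only [Finset.sum_apply, Pi.smul_apply, smul_eq_mul, Matrix.mulVec,
          dotProduct, Matrix.mulVec_single]
        refine Finset.sum_congr rfl fun l _ => ?_
        rw [hScol l i, mul_comm]
        congr 1
        simp [Pi.single_apply]
      ext i k
      have := congrFun (hk k) i
      rw [Matrix.mulVec_single, Matrix.mulVec_single] at this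
      simpa using this
    rw [← hmul, mul_assoc, h1, mul_one]
end
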